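/- arXiv:1910.12406 — 4 statements merged into one kernel-verified Lean document; each statement's English description precedes it below -/
import Mathlib

section
/- Let 0 < η < 1/2 and let P = (p_1,…,p_l) be a probability vector with η ≤ p_j ≤ 1−η for all j. Let e_1,…,e_l > 0 and let p̂_1,…,p̂_l ∈ [0,1] satisfy |p̂_j − p_j| ≤ e_j and p̂_j ≥ (7/2)e_j for every j. Then Σ_{j=1}^l √(1/p_j − 1) ≤ Σ_{j=1}^l √(1/(p̂_j − e_j) − 1) ≤ Σ_{j=1}^l √(1/p_j − 1) + Σ_{j=1}^l min( (2/η)√(e_j) , 2 e_j / η^{5/2} ). -/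
/-!
Work coordinatewise with `q = p̂ - e`. The hypotheses give `p / 2 ≤ q ≤ p ≤ q + 2 e`, so since
`x ↦ 1/x - 1` is decreasing, `b = 1/p - 1 ≤ a = 1/q - 1`, and
`a - b = (p - q) / (p q) ≤ 4 e / η²`. Moreover `b ≥ η` on the `η`-interior. Then
`√a - √b ≤ √(a - b)` gives the term `(2/η)√e`, and `√a - √b ≤ (a - b) / (2√b)` gives
`2 e / η^{5/2}`.
-/

open Finset

theorem Real.sqrt_le_sqrt_add_sqrt_sub (a b : ℝ) : √a ≤ √b + √(a - b) := by
  rcases le_total b 0 with hb | hb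
  · rw [Real.sqrt_eq_zero'.2 hb, zero_add]
    exact Real.sqrt_le_sqrt (by linarith)
  rcases le_total a b with hab | hba
  · exact (Real.sqrt_le_sqrt hab).trans (le_add_of_nonneg_right (Real.sqrt_nonneg _))
  rw [Real.sqrt_le_left (by positivity)]
  nlinarith [Real.sq_sqrt hb, Real.sq_sqrt (sub_nonneg.2 hba), Real.sqrt_nonneg b,
    Real.sqrt_nonneg (a - b)]

/-- AM–GM in the form `√a √b ≤ (a + b) / 2`. -/
theorem Real.sqrt_le_sqrt_add_sub_div {a b : ℝ} (ha : 0 ≤ a) (hb : 0 < b) :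
    √a ≤ √b + (a - b) / (2 * √b) := by
  have hsb : 0 < √b := Real.sqrt_pos.2 hb
  have hamgm : 2 * √a * √b ≤ a + b := by
    nlinarith [sq_nonneg (√a - √b), Real.sq_sqrt ha, Real.sq_sqrt hb.le]
  rw [← sub_le_iff_le_add', le_div_iff₀ (by positivity)]
  nlinarith [Real.sq_sqrt hb.le]

theorem Real.sqrt_le_sqrt_add_min {a b β d : ℝ} (hβ : 0 < β) (hβb : β ≤ b) (hba : b ≤ a)
    (hd : a - b ≤ d) : √a ≤ √b + min (√d) (d / (2 * √β)) := by
  have hb : 0 < b := hβ.trans_le hβb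
  rcases min_choice (√d) (d / (2 * √β)) with h | h <;> rw [h]
  · exact (Real.sqrt_le_sqrt_add_sqrt_sub a b).trans
      (add_le_add_right (Real.sqrt_le_sqrt hd) _)
  · refine (Real.sqrt_le_sqrt_add_sub_div (hb.le.trans hba) hb).trans (add_le_add_right ?_ _)
    have hd0 : 0 ≤ d := by linarith
    have hsβ : 0 < √β := Real.sqrt_pos.2 hβ
    calc (a - b) / (2 * √b) ≤ d / (2 * √b) := by gcongr
      _ ≤ d / (2 * √β) := by gcongr

theorem le_one_div_sub_one {η p : ℝ} (hη : 0 < η) (hp : p ∈ Set.Icc η (1 - η)) :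
    η ≤ 1 / p - 1 := by
  obtain ⟨hηp, hp1⟩ := hp
  rw [le_sub_iff_add_le, le_div_iff₀ (hη.trans_le hηp)]
  nlinarith

theorem one_div_sub_one_sub_le {η p q e : ℝ} (hη : 0 < η) (hηp : η ≤ p) (hpq : p / 2 ≤ q)
    (hqp : q ≤ p) (he : p - q ≤ 2 * e) :
    (1 / q - 1) - (1 / p - 1) ≤ 4 * e / η ^ 2 := by
  have hp : 0 < p := hη.trans_le hηp
  have hq : 0 < q := by linarith
  have hden : η * (η / 2) ≤ p * q := mul_le_mul hηp (by linarith) (by positivity) hp.le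
  calc (1 / q - 1) - (1 / p - 1) = (p - q) / (p * q) := by field_simp; ring
    _ ≤ 2 * e / (η * (η / 2)) := div_le_div₀ (by linarith) he (by positivity) hden
    _ = 4 * e / η ^ 2 := by field_simp; ring

/-- The lower confidence bound `x - e` of `p` is at least `p / 2`: when `p ≤ 4 e` this is
`x - e ≥ 5 e / 2`, otherwise `x - e ≥ p - 2 e`. -/
theorem half_le_sub_of_abs_sub_le {x p e : ℝ} (hclose : |x - p| ≤ e) (hbig : 7 / 2 * e ≤ x) :
    p / 2 ≤ x - e := by
  have := abs_le.1 hclose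
  rcases le_total p (4 * e) with h | h <;> linarith

theorem sqrt_one_div_sub_one_confidence {η p x e : ℝ} (hη : 0 < η) (hp : p ∈ Set.Icc η (1 - η))
    (hclose : |x - p| ≤ e) (hbig : 7 / 2 * e ≤ x) :
    √(1 / p - 1) ≤ √(1 / (x - e) - 1) ∧
      √(1 / (x - e) - 1) ≤ √(1 / p - 1) + min (2 / η * √e) (2 * e / η ^ ((5 : ℝ) / 2)) := by
  obtain ⟨hlo, hhi⟩ := abs_le.1 hclose
  have he : 0 ≤ e := (abs_nonneg _).trans hclose
  have hhalf := half_le_sub_of_abs_sub_le hclose hbig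
  have hq : 0 < x - e := by linarith [hp.1]
  have hmono : 1 / p - 1 ≤ 1 / (x - e) - 1 :=
    sub_le_sub_right (one_div_le_one_div_of_le hq (by linarith)) 1
  refine ⟨Real.sqrt_le_sqrt hmono, ?_⟩
  have hsqrt : √(4 * e / η ^ 2) = 2 / η * √e := by
    rw [Real.sqrt_div' _ (sq_nonneg η), Real.sqrt_sq hη.le, Real.sqrt_mul' _ he,
      show (4 : ℝ) = 2 ^ 2 by norm_num, Real.sqrt_sq zero_le_two]
    ring
  have hrpow : 4 * e / η ^ 2 / (2 * √η) = 2 * e / η ^ ((5 : ℝ) / 2) := by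
    rw [Real.sqrt_eq_rpow, show (5 : ℝ) / 2 = 2 + 1 / 2 by norm_num, Real.rpow_add hη,
      Real.rpow_two]
    field_simp
    ring
  rw [← hsqrt, ← hrpow]
  exact Real.sqrt_le_sqrt_add_min hη (le_one_div_sub_one hη hp) hmono
    (one_div_sub_one_sub_le hη hp.1 hhalf (by linarith) (by linarith))

theorem separation_coeff_confidence_general
    {l : ℕ} (η : ℝ) (hη : 0 < η)
    (p : Fin l → ℝ) (hp : ∀ j, p j ∈ Set.Icc η (1 - η))
    (e : Fin l → ℝ)
    (phat : Fin l → ℝ)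
    (hclose : ∀ j, |phat j - p j| ≤ e j)
    (hbig : ∀ j, (7 / 2) * e j ≤ phat j) :
    (∑ j, Real.sqrt (1 / p j - 1) ≤ ∑ j, Real.sqrt (1 / (phat j - e j) - 1)) ∧
      (∑ j, Real.sqrt (1 / (phat j - e j) - 1)
        ≤ ∑ j, Real.sqrt (1 / p j - 1)
          + ∑ j, min ((2 / η) * Real.sqrt (e j)) (2 * e j / η ^ ((5 : ℝ) / 2))) := by
  have key j := sqrt_one_div_sub_one_confidence hη (hp j) (hclose j) (hbig j)
  refine ⟨sum_le_sum fun j _ ↦ (key j).1, ?_⟩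
  rw [← sum_add_distrib]
  exact sum_le_sum fun j _ ↦ (key j).2

/-- For `P` in the `η`-interior of the simplex and estimates `p̂_j`
with confidence radii `e_j` satisfying `|p̂_j − p_j| ≤ e_j` and `p̂_j ≥ (7/2)e_j`,
`Σ_j √(1/p_j − 1) ≤ Σ_j √(1/(p̂_j − e_j) − 1)
   ≤ Σ_j √(1/p_j − 1) + Σ_j min((2/η)√e_j , 2 e_j/η^{5/2})`. -/
theorem separation_coeff_confidence
    {l : ℕ} (hl : 2 ≤ l) (η : ℝ) (hη : 0 < η) (hη' : η < 1 / 2)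
    (p : Fin l → ℝ) (hp : ∀ j, p j ∈ Set.Icc η (1 - η)) (hp1 : ∑ j, p j = 1)
    (e : Fin l → ℝ) (he : ∀ j, 0 < e j)
    (phat : Fin l → ℝ) (hphat : ∀ j, phat j ∈ Set.Icc (0 : ℝ) 1)
    (hclose : ∀ j, |phat j - p j| ≤ e j)
    (hbig : ∀ j, (7 / 2) * e j ≤ phat j) :
    (∑ j, Real.sqrt (1 / p j - 1) ≤ ∑ j, Real.sqrt (1 / (phat j - e j) - 1)) ∧
      (∑ j, Real.sqrt (1 / (phat j - e j) - 1)
        ≤ ∑ j, Real.sqrt (1 / p j - 1)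
          + ∑ j, min ((2 / η) * Real.sqrt (e j)) (2 * e j / η ^ ((5 : ℝ) / 2))) :=
  separation_coeff_confidence_general η hη p hp e phat hclose hbig
end

section
/- Let γ_1,…,γ_K and φ_1,…,φ_K be real-valued functions on (0,∞), with each γ_i strictly decreasing, and set R_i = γ_i − φ_i. Suppose T_1*,…,T_K* > 0 and T̃_1*,…,T̃_K* > 0 satisfy Σ_{i=1}^K T_i* = Σ_{i=1}^K T̃_i*, that γ_i(T_i*) = μ for all i (some common value μ), and that φ_i(T̃_i*) = λ for all i (some common value λ). Then |λ − μ| ≤ 2 max_{1≤i≤K} |R_i(T̃_i*)|. -/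
/-!
Since both allocations spend the same budget, some arm `i` gets no more samples from the oracle
than from the approx-oracle, and some arm `j` gets no fewer. Monotonicity of `γ_i` then gives
`γ_i(T̃_i*) ≤ μ ≤ γ_j(T̃_j*)`, while `φ_i(T̃_i*) = φ_j(T̃_j*) = λ`; so `λ - μ` is bounded by the
remainder of arm `i` and `μ - λ` by that of arm `j`.
-/

theorem abs_sub_le_iSup_abs_sub_of_sum_eq {ι : Type*} [Fintype ι] [Nonempty ι] {s : Set ℝ}
    {γ φ : ι → ℝ → ℝ} (hγ : ∀ i, AntitoneOn (γ i) s) {Ts Tt : ι → ℝ}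
    (hTs : ∀ i, Ts i ∈ s) (hTt : ∀ i, Tt i ∈ s) (hbudget : ∑ i, Ts i = ∑ i, Tt i)
    {mu lam : ℝ} (hmu : ∀ i, γ i (Ts i) = mu) (hlam : ∀ i, φ i (Tt i) = lam) :
    |lam - mu| ≤ ⨆ i, |γ i (Tt i) - φ i (Tt i)| := by
  have hR i : |γ i (Tt i) - φ i (Tt i)| ≤ ⨆ i, |γ i (Tt i) - φ i (Tt i)| :=
    le_ciSup (Finite.bddAbove_range fun i => |γ i (Tt i) - φ i (Tt i)|) i
  obtain ⟨i, -, hi⟩ := Finset.exists_le_of_sum_le Finset.univ_nonempty hbudget.le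
  obtain ⟨j, -, hj⟩ := Finset.exists_le_of_sum_le Finset.univ_nonempty hbudget.ge
  have hγi : γ i (Tt i) ≤ mu := hmu i ▸ hγ i (hTs i) (hTt i) hi
  have hγj : mu ≤ γ j (Tt j) := hmu j ▸ hγ j (hTt j) (hTs j) hj
  refine abs_sub_le_iff.2 ⟨?_, ?_⟩
  · calc lam - mu ≤ φ i (Tt i) - γ i (Tt i) := by linarith [hlam i]
      _ ≤ |γ i (Tt i) - φ i (Tt i)| := by rw [abs_sub_comm]; exact le_abs_self _
      _ ≤ _ := hR i
  · calc mu - lam ≤ γ j (Tt j) - φ j (Tt j) := by linarith [hlam j]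
      _ ≤ |γ j (Tt j) - φ j (Tt j)| := le_abs_self _
      _ ≤ _ := hR j

/-- If the strictly decreasing exact objectives `γ_i` are equalized
(to `μ`) by the oracle allocation `(T_i*)` and the approximations `φ_i` are
equalized (to `λ`) by the approx-oracle allocation `(T̃_i*)`, both with the same
total budget, then `|λ − μ| ≤ 2 max_i |R_i(T̃_i*)|` where `R_i = γ_i − φ_i`. -/
theorem approx_oracle_value_close
    (K : ℕ) (hK : 1 ≤ K)
    (γ φ : Fin K → ℝ → ℝ)
    (hγ : ∀ i, StrictAntiOn (γ i) (Set.Ioi 0))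
    (Ts Tt : Fin K → ℝ) (hTs : ∀ i, 0 < Ts i) (hTt : ∀ i, 0 < Tt i)
    (hbudget : ∑ i, Ts i = ∑ i, Tt i)
    (mu lam : ℝ) (hmu : ∀ i, γ i (Ts i) = mu) (hlam : ∀ i, φ i (Tt i) = lam) :
    |lam - mu| ≤ 2 * ⨆ i, |γ i (Tt i) - φ i (Tt i)| := by
  have : Nonempty (Fin K) := Fin.pos_iff_nonempty.mp hK
  have hclose := abs_sub_le_iSup_abs_sub_of_sum_eq (fun i => (hγ i).antitoneOn) hTs hTt hbudget
    hmu hlam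
  have hR_nonneg : 0 ≤ ⨆ i, |γ i (Tt i) - φ i (Tt i)| := Real.iSup_nonneg fun _ => abs_nonneg _
  linarith
end

section
/- Let n ≥ 1, let 1/2 < p_0 < 1 and 0 < ε < p_0 − 1/2, let c : (0,1) → (0,∞) be any function and α > 0. Consider two-armed Bernoulli problem instances: instance P_1 has arm distributions (Bernoulli(p_0), Bernoulli(p_0 − ε)) and instance P_2 has (Bernoulli(p_0 − ε), Bernoulli(p_0)); for an instance with arm parameters giving values c_1 = c(parameter of arm 1) and c_2 = c(parameter of arm 2), the approx-oracle allocation is T̃_i* = n·c_i^{1/α}/(c_1^{1/α} + c_2^{1/α}). Then for every adaptive allocation scheme with budget n, denoting by T_i the (random) total number of samples it draws from arm i, one has max over the two instances of max_{i∈{1,2}} E[ |T_i − T̃_i*| ] ≥ ((1 − ε·√(n/(1−p_0)))/2) · (n/2) · |c(p_0)^{1/α} − c(p_0−ε)^{1/α}| / ( c(p_0)^{1/α} + c(p_0−ε)^{1/α} ). -/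
open Finset

/-- The arm chosen at round `t` by the adaptive scheme `π` on the outcome
sequence `ω`: `π` sees only the strict prefix of outcomes before round `t`. -/
def chosenArm (π : (t : ℕ) → (Fin t → Bool) → Fin 2) {n : ℕ}
    (ω : Fin n → Bool) (t : Fin n) : Fin 2 :=
  π t.1 (fun s : Fin t.1 => ω ⟨s.1, s.2.trans t.2⟩)

/-- The probability mass of a full outcome sequence `ω ∈ {0,1}^n` under the
two-armed Bernoulli instance with parameters `θ` and the adaptive scheme `π`. -/
def seqProb (θ : Fin 2 → ℝ) (π : (t : ℕ) → (Fin t → Bool) → Fin 2) {n : ℕ}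
    (ω : Fin n → Bool) : ℝ :=
  ∏ t : Fin n, (if ω t then θ (chosenArm π ω t) else 1 - θ (chosenArm π ω t))

/-- `T_i(ω)`: the total number of rounds in which arm `i` is chosen. -/
def pulls (π : (t : ℕ) → (Fin t → Bool) → Fin 2) {n : ℕ}
    (ω : Fin n → Bool) (i : Fin 2) : ℕ :=
  (Finset.univ.filter (fun t => chosenArm π ω t = i)).card

/-- `E[|T_i − target|]` under the instance `θ` with scheme `π` and budget `n`. -/
noncomputable def expDev (θ : Fin 2 → ℝ) (π : (t : ℕ) → (Fin t → Bool) → Fin 2)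
    (n : ℕ) (i : Fin 2) (target : ℝ) : ℝ :=
  ∑ ω : Fin n → Bool, seqProb θ π ω * |(pulls π ω i : ℝ) - target|

/-!
Le Cam's two-point method. Pointwise, `P |X - t₁| + Q |X - t₂| ≥ min P Q * |t₁ - t₂|`, so the
expected deviations of `T₁` from its two targets sum to at least `(1 - ‖P₁ - P₂‖₁ / 2) |t₁ - t₂|`,
and the targets differ by `n |c(p₀)^{1/α} - c(p₀-ε)^{1/α}| / D`.

The `L¹` distance between the laws of the outcome sequence is controlled by their Bhattacharyya
coefficient `∑ √(P₁ P₂)`. Although sampling is adaptive, the two instances swap the arm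
parameters, so every round contributes the same factor `ρ = √(p₀(p₀-ε)) + √((1-p₀)(1-p₀+ε))`
whichever arm is played; hence `‖P₁ - P₂‖₁² ≤ 8 (1 - ρⁿ) ≤ 8 n (1 - ρ) ≤ 4 n ε² / (1 - p₀)`.
-/

noncomputable def bernoulliBhattacharyya (p q : ℝ) : ℝ :=
  √(p * q) + √((1 - p) * (1 - q))

theorem bernoulliBhattacharyya_comm (p q : ℝ) :
    bernoulliBhattacharyya p q = bernoulliBhattacharyya q p := by
  simp only [bernoulliBhattacharyya, mul_comm]

theorem sq_sqrt_sub_sqrt_mul_le {x y : ℝ} (hy : 0 ≤ y) (hyx : y ≤ x) :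
    (√x - √y) ^ 2 * (4 * y) ≤ (x - y) ^ 2 := by
  have hsum : 4 * y ≤ (√x + √y) ^ 2 := by
    have := Real.sqrt_le_sqrt hyx
    nlinarith [Real.sq_sqrt hy, Real.sqrt_nonneg y]
  calc (√x - √y) ^ 2 * (4 * y) ≤ (√x - √y) ^ 2 * (√x + √y) ^ 2 := by gcongr
    _ = (x - y) ^ 2 := by
      rw [← mul_pow, mul_comm, ← sq_sub_sq, Real.sq_sqrt (hy.trans hyx), Real.sq_sqrt hy]

theorem one_sub_bernoulliBhattacharyya_eq {p q : ℝ} (hp : p ∈ Set.Icc 0 1)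
    (hq : q ∈ Set.Icc 0 1) :
    1 - bernoulliBhattacharyya p q = ((√p - √q) ^ 2 + (√(1 - q) - √(1 - p)) ^ 2) / 2 := by
  obtain ⟨hp₀, hp₁⟩ := hp
  obtain ⟨hq₀, hq₁⟩ := hq
  rw [bernoulliBhattacharyya, Real.sqrt_mul hp₀, Real.sqrt_mul (sub_nonneg.2 hp₁)]
  linear_combination (-Real.sq_sqrt hp₀ - Real.sq_sqrt hq₀ - Real.sq_sqrt (sub_nonneg.2 hp₁)
    - Real.sq_sqrt (sub_nonneg.2 hq₁)) / 2

theorem one_sub_bernoulliBhattacharyya_le {p q : ℝ} (hq : 0 < q) (hqp : q ≤ p) (hp : p < 1) :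
    1 - bernoulliBhattacharyya p q ≤ (p - q) ^ 2 / (8 * q * (1 - p)) := by
  rw [one_sub_bernoulliBhattacharyya_eq ⟨by linarith, by linarith⟩ ⟨hq.le, by linarith⟩,
    le_div_iff₀ (by nlinarith)]
  have h₁ := sq_sqrt_sub_sqrt_mul_le hq.le hqp
  have h₂ := sq_sqrt_sub_sqrt_mul_le (sub_nonneg.2 hp.le) (sub_le_sub_left hqp 1)
  have h₃ : (1 - p) * (p - q) ^ 2 + q * (p - q) ^ 2 ≤ (p - q) ^ 2 := by
    nlinarith [sq_nonneg (p - q)]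
  nlinarith [mul_le_mul_of_nonneg_left h₁ (sub_nonneg.2 hp.le),
    mul_le_mul_of_nonneg_left h₂ hq.le]

theorem vec2_mem_Icc {p q : ℝ} (hp : p ∈ Set.Icc 0 1) (hq : q ∈ Set.Icc 0 1) :
    ∀ i, ![p, q] i ∈ Set.Icc 0 1 := by
  intro i
  fin_cases i
  exacts [hp, hq]

section Distribution

variable {ι : Type*} [Fintype ι] {P Q : ι → ℝ}

theorem sq_sum_abs_sub_le (hP : ∀ i, 0 ≤ P i) (hQ : ∀ i, 0 ≤ Q i) (hP₁ : ∑ i, P i = 1)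
    (hQ₁ : ∑ i, Q i = 1) : (∑ i, |P i - Q i|) ^ 2 ≤ 8 * (1 - ∑ i, √(P i * Q i)) := by
  set B := ∑ i, √(P i * Q i)
  have hfactor : ∀ i, |P i - Q i| = |√(P i) - √(Q i)| * (√(P i) + √(Q i)) := fun i => by
    rw [← abs_of_nonneg (by positivity : 0 ≤ √(P i) + √(Q i)), ← abs_mul, mul_comm, ← sq_sub_sq,
      Real.sq_sqrt (hP i), Real.sq_sqrt (hQ i)]
  have hsq : ∀ s : ℝ, ∑ i, (√(P i) + s * √(Q i)) ^ 2 = 1 + s ^ 2 + 2 * s * B := fun s => by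
    have hpt : ∀ i, (√(P i) + s * √(Q i)) ^ 2 = P i + s ^ 2 * Q i + 2 * s * √(P i * Q i) :=
      fun i => by
        rw [Real.sqrt_mul (hP i)]
        linear_combination Real.sq_sqrt (hP i) + s ^ 2 * Real.sq_sqrt (hQ i)
    simp only [hpt, sum_add_distrib, ← mul_sum, hP₁, hQ₁, mul_one, B]
  calc (∑ i, |P i - Q i|) ^ 2
      = (∑ i, |√(P i) - √(Q i)| * (√(P i) + √(Q i))) ^ 2 := by simp only [hfactor]
    _ ≤ (∑ i, |√(P i) - √(Q i)| ^ 2) * ∑ i, (√(P i) + √(Q i)) ^ 2 :=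
        sum_mul_sq_le_sq_mul_sq _ _ _
    _ = (1 + (-1) ^ 2 + 2 * (-1) * B) * (1 + 1 ^ 2 + 2 * 1 * B) := by
        simp only [← hsq, sq_abs, sub_eq_add_neg, neg_one_mul, one_mul]
    _ ≤ 8 * (1 - B) := by nlinarith [sq_nonneg (1 - B)]

theorem sum_min_eq (hP₁ : ∑ i, P i = 1) (hQ₁ : ∑ i, Q i = 1) :
    ∑ i, min (P i) (Q i) = 1 - (∑ i, |P i - Q i|) / 2 := by
  have hpt : ∀ i, min (P i) (Q i) = (P i + Q i - |P i - Q i|) / 2 := fun i => by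
    linarith [min_add_max (P i) (Q i), max_sub_min_eq_abs' (P i) (Q i)]
  simp only [hpt, ← sum_div, sum_sub_distrib, sum_add_distrib, hP₁, hQ₁]
  ring

theorem sum_min_mul_abs_sub_le (hP : ∀ i, 0 ≤ P i) (hQ : ∀ i, 0 ≤ Q i) (X : ι → ℝ)
    (t₁ t₂ : ℝ) :
    (∑ i, min (P i) (Q i)) * |t₁ - t₂| ≤ ∑ i, P i * |X i - t₁| + ∑ i, Q i * |X i - t₂| := by
  rw [sum_mul, ← sum_add_distrib]
  refine sum_le_sum fun i _ => ?_
  calc min (P i) (Q i) * |t₁ - t₂|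
      ≤ min (P i) (Q i) * (|X i - t₁| + |X i - t₂|) := by
        gcongr
        · exact le_min (hP i) (hQ i)
        · linarith [abs_sub_le t₁ (X i) t₂, abs_sub_comm t₁ (X i)]
    _ ≤ P i * |X i - t₁| + Q i * |X i - t₂| := by
        rw [mul_add]
        gcongr
        exacts [min_le_left _ _, min_le_right _ _]

end Distribution

theorem sum_eq_pow_of_snoc {ρ : ℝ} (F : (n : ℕ) → (Fin n → Bool) → ℝ)
    (g : (n : ℕ) → (Fin n → Bool) → Bool → ℝ) (hF₀ : ∀ ω, F 0 ω = 1)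
    (hF : ∀ n ω b, F (n + 1) (Fin.snoc ω b) = F n ω * g n ω b)
    (hg : ∀ n ω, ∑ b, g n ω b = ρ) (n : ℕ) :
    ∑ ω, F n ω = ρ ^ n := by
  induction n with
  | zero => simp [hF₀]
  | succ n ih =>
    rw [← (Fin.snocEquiv fun _ => Bool).sum_comp, Fintype.sum_prod_type, sum_comm, pow_succ, ← ih,
      sum_mul]
    refine sum_congr rfl fun ω _ => ?_
    change ∑ b, F (n + 1) (Fin.snoc ω b) = _
    simp only [hF, ← mul_sum, hg]

section AdaptiveScheme

variable {π : (t : ℕ) → (Fin t → Bool) → Fin 2}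

theorem chosenArm_snoc_castSucc {n : ℕ} (ω : Fin n → Bool) (b : Bool) (t : Fin n) :
    chosenArm π (Fin.snoc ω b) t.castSucc = chosenArm π ω t := by
  unfold chosenArm
  congr 1
  funext s
  simp [Fin.snoc, s.2.trans t.2]

theorem chosenArm_snoc_last {n : ℕ} (ω : Fin n → Bool) (b : Bool) :
    chosenArm π (Fin.snoc ω b) (Fin.last n) = π n ω := by
  unfold chosenArm
  congr 1
  funext s
  simp [Fin.snoc]

theorem seqProb_snoc (θ : Fin 2 → ℝ) {n : ℕ} (ω : Fin n → Bool) (b : Bool) :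
    seqProb θ π (Fin.snoc ω b) = seqProb θ π ω * if b then θ (π n ω) else 1 - θ (π n ω) := by
  simp only [seqProb, Fin.prod_univ_castSucc, chosenArm_snoc_castSucc, chosenArm_snoc_last,
    Fin.snoc_castSucc, Fin.snoc_last]

theorem seqProb_nonneg {θ : Fin 2 → ℝ} (hθ : ∀ i, θ i ∈ Set.Icc 0 1) {n : ℕ}
    (ω : Fin n → Bool) : 0 ≤ seqProb θ π ω := by
  refine prod_nonneg fun t _ => ?_
  obtain ⟨h₀, h₁⟩ := hθ (chosenArm π ω t)
  split <;> linarith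

theorem expDev_nonneg {θ : Fin 2 → ℝ} (hθ : ∀ i, θ i ∈ Set.Icc 0 1) (n : ℕ) (i : Fin 2)
    (target : ℝ) : 0 ≤ expDev θ π n i target :=
  sum_nonneg fun ω _ => mul_nonneg (seqProb_nonneg hθ ω) (abs_nonneg _)

theorem sum_seqProb (θ : Fin 2 → ℝ) (n : ℕ) : ∑ ω : Fin n → Bool, seqProb θ π ω = 1 := by
  rw [← one_pow n]
  refine sum_eq_pow_of_snoc (fun _ ω => seqProb θ π ω)
    (fun n ω b => if b then θ (π n ω) else 1 - θ (π n ω)) (fun _ => by simp [seqProb])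
    (fun _ _ _ => seqProb_snoc ..) (fun _ _ => ?_) n
  simp

theorem sum_sqrt_seqProb_mul {θ₁ θ₂ : Fin 2 → ℝ} (hθ₁ : ∀ i, θ₁ i ∈ Set.Icc 0 1)
    (hθ₂ : ∀ i, θ₂ i ∈ Set.Icc 0 1) {ρ : ℝ}
    (hρ : ∀ i, bernoulliBhattacharyya (θ₁ i) (θ₂ i) = ρ) (n : ℕ) :
    ∑ ω : Fin n → Bool, √(seqProb θ₁ π ω * seqProb θ₂ π ω) = ρ ^ n := by
  refine sum_eq_pow_of_snoc (fun _ ω => √(seqProb θ₁ π ω * seqProb θ₂ π ω))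
    (fun n ω b => if b then √(θ₁ (π n ω) * θ₂ (π n ω))
      else √((1 - θ₁ (π n ω)) * (1 - θ₂ (π n ω))))
    (fun _ => by simp [seqProb]) (fun n ω b => ?_) (fun n ω => ?_) n
  · have h := mul_nonneg (seqProb_nonneg (π := π) hθ₁ ω) (seqProb_nonneg (π := π) hθ₂ ω)
    cases b <;>
    · simp only [seqProb_snoc, Bool.false_eq_true, if_true, if_false, ← Real.sqrt_mul h]
      ring_nf
  · simpa [bernoulliBhattacharyya, add_comm] using hρ (π n ω)

variable (π)

theorem sq_sum_abs_sub_seqProb_le {θ₁ θ₂ : Fin 2 → ℝ} (hθ₁ : ∀ i, θ₁ i ∈ Set.Icc 0 1)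
    (hθ₂ : ∀ i, θ₂ i ∈ Set.Icc 0 1) {ρ : ℝ}
    (hρ : ∀ i, bernoulliBhattacharyya (θ₁ i) (θ₂ i) = ρ) (n : ℕ) :
    (∑ ω : Fin n → Bool, |seqProb θ₁ π ω - seqProb θ₂ π ω|) ^ 2 ≤ 8 * n * (1 - ρ) := by
  have hρ₀ : 0 ≤ ρ := hρ 0 ▸ by unfold bernoulliBhattacharyya; positivity
  have hbernoulli := one_add_mul_le_pow (a := ρ - 1) (by linarith) n
  rw [add_sub_cancel] at hbernoulli
  calc _ ≤ 8 * (1 - ∑ ω : Fin n → Bool, √(seqProb θ₁ π ω * seqProb θ₂ π ω)) :=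
        sq_sum_abs_sub_le (seqProb_nonneg hθ₁) (seqProb_nonneg hθ₂) (sum_seqProb θ₁ n)
          (sum_seqProb θ₂ n)
    _ ≤ 8 * n * (1 - ρ) := by
        rw [sum_sqrt_seqProb_mul hθ₁ hθ₂ hρ]
        linarith

theorem sum_abs_sub_seqProb_swap_le {p q : ℝ} (hq : 1 / 4 ≤ q) (hqp : q ≤ p) (hp : p < 1)
    (n : ℕ) :
    ∑ ω : Fin n → Bool, |seqProb ![p, q] π ω - seqProb ![q, p] π ω|
      ≤ 2 * (p - q) * √(n / (1 - p)) := by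
  have hp' : p ∈ Set.Icc 0 1 := ⟨by linarith, hp.le⟩
  have hq' : q ∈ Set.Icc 0 1 := ⟨by linarith, by linarith⟩
  have hθ₁ := vec2_mem_Icc hp' hq'
  have hθ₂ := vec2_mem_Icc hq' hp'
  have hρ : ∀ i, bernoulliBhattacharyya (![p, q] i) (![q, p] i) = bernoulliBhattacharyya p q := by
    intro i; fin_cases i
    · rfl
    · exact bernoulliBhattacharyya_comm q p
  have hB := one_sub_bernoulliBhattacharyya_le (by linarith) hqp hp
  refine le_of_pow_le_pow_left₀ two_ne_zero (by have := sub_nonneg.2 hqp; positivity) ?_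
  calc _ ≤ 8 * n * (1 - bernoulliBhattacharyya p q) := sq_sum_abs_sub_seqProb_le π hθ₁ hθ₂ hρ n
    _ ≤ 8 * n * ((p - q) ^ 2 / (8 * q * (1 - p))) := by gcongr
    _ = n * (p - q) ^ 2 / (1 - p) / q := by field_simp
    _ ≤ n * (p - q) ^ 2 / (1 - p) / (1 / 4) := by gcongr
    _ = (2 * (p - q) * √(n / (1 - p))) ^ 2 := by
        rw [mul_pow, Real.sq_sqrt (div_nonneg n.cast_nonneg (by linarith))]
        ring

theorem le_expDev_add_expDev {θ₁ θ₂ : Fin 2 → ℝ} (hθ₁ : ∀ i, θ₁ i ∈ Set.Icc 0 1)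
    (hθ₂ : ∀ i, θ₂ i ∈ Set.Icc 0 1) (n : ℕ) (i : Fin 2) (t₁ t₂ : ℝ) :
    (1 - (∑ ω : Fin n → Bool, |seqProb θ₁ π ω - seqProb θ₂ π ω|) / 2) * |t₁ - t₂|
      ≤ expDev θ₁ π n i t₁ + expDev θ₂ π n i t₂ := by
  rw [← sum_min_eq (sum_seqProb θ₁ n) (sum_seqProb θ₂ n)]
  exact sum_min_mul_abs_sub_le (seqProb_nonneg hθ₁) (seqProb_nonneg hθ₂) _ t₁ t₂

end AdaptiveScheme

theorem tracking_lower_bound_general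
    (n : ℕ) (p0 ε : ℝ)
    (hp0' : p0 < 1) (hε : 0 < ε) (hε' : ε < p0 - 1 / 2)
    (c : ℝ → ℝ) (hc : ∀ x ∈ Set.Ioo (0 : ℝ) 1, 0 < c x) (α : ℝ)
    (π : (t : ℕ) → (Fin t → Bool) → Fin 2)
    (θ1 θ2 : Fin 2 → ℝ) (hθ1 : θ1 = ![p0, p0 - ε]) (hθ2 : θ2 = ![p0 - ε, p0])
    (D : ℝ) (hD : D = c p0 ^ (1 / α) + c (p0 - ε) ^ (1 / α)) :
    ((1 - ε * Real.sqrt ((n : ℝ) / (1 - p0))) / 2) * ((n : ℝ) / 2) *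
        |c p0 ^ (1 / α) - c (p0 - ε) ^ (1 / α)| / D
      ≤ max
          (max (expDev θ1 π n 0 ((n : ℝ) * c p0 ^ (1 / α) / D))
               (expDev θ1 π n 1 ((n : ℝ) * c (p0 - ε) ^ (1 / α) / D)))
          (max (expDev θ2 π n 0 ((n : ℝ) * c (p0 - ε) ^ (1 / α) / D))
               (expDev θ2 π n 1 ((n : ℝ) * c p0 ^ (1 / α) / D))) := by
  have hp : p0 ∈ Set.Icc 0 1 := ⟨by linarith, hp0'.le⟩
  have hq : p0 - ε ∈ Set.Icc 0 1 := ⟨by linarith, by linarith⟩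
  have hθ₁ := hθ1 ▸ vec2_mem_Icc hp hq
  have hθ₂ := hθ2 ▸ vec2_mem_Icc hq hp
  have hTV := sum_abs_sub_seqProb_swap_le π (q := p0 - ε) (by linarith) (by linarith) hp0' n
  rw [sub_sub_cancel, ← hθ1, ← hθ2] at hTV
  have hD₀ : 0 < D := by
    rw [hD]
    exact add_pos (Real.rpow_pos_of_pos (hc _ ⟨by linarith, hp0'⟩) _)
      (Real.rpow_pos_of_pos (hc _ ⟨by linarith, by linarith⟩) _)
  set a := c p0 ^ (1 / α)
  set b := c (p0 - ε) ^ (1 / α)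
  have hLeCam := le_expDev_add_expDev π hθ₁ hθ₂ n 0 (n * a / D) (n * b / D)
  have hE₁ := expDev_nonneg (π := π) hθ₁ n 0 (n * a / D)
  calc _ = (1 - ε * √(n / (1 - p0))) / 4 * |n * a / D - n * b / D| := by
        rw [← sub_div, ← mul_sub, abs_div, abs_mul, abs_of_pos hD₀, Nat.abs_cast]
        ring
    _ ≤ (expDev θ1 π n 0 (n * a / D) + expDev θ2 π n 0 (n * b / D)) / 4 := by
        nlinarith [abs_nonneg (n * a / D - n * b / D)]
    _ ≤ _ := by grind

/-- Change-of-measure lower bound for tracking.  For any adaptive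
allocation scheme with budget `n` on the two two-armed Bernoulli instances
`P₁ = (Ber(p₀), Ber(p₀−ε))`, `P₂ = (Ber(p₀−ε), Ber(p₀))`, the worst (over the two
instances and two arms) expected deviation of the pull counts from the
approx-oracle allocation `T̃_i* = n c_i^{1/α}/(c₁^{1/α}+c₂^{1/α})` is at least
`((1 − ε√(n/(1−p₀)))/2)·(n/2)·|c(p₀)^{1/α} − c(p₀−ε)^{1/α}|/(c(p₀)^{1/α}+c(p₀−ε)^{1/α})`. -/
theorem tracking_lower_bound
    (n : ℕ) (hn : 1 ≤ n) (p0 ε : ℝ)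
    (hp0 : 1 / 2 < p0) (hp0' : p0 < 1) (hε : 0 < ε) (hε' : ε < p0 - 1 / 2)
    (c : ℝ → ℝ) (hc : ∀ x ∈ Set.Ioo (0 : ℝ) 1, 0 < c x) (α : ℝ) (hα : 0 < α)
    (π : (t : ℕ) → (Fin t → Bool) → Fin 2)
    (θ1 θ2 : Fin 2 → ℝ) (hθ1 : θ1 = ![p0, p0 - ε]) (hθ2 : θ2 = ![p0 - ε, p0])
    (D : ℝ) (hD : D = c p0 ^ (1 / α) + c (p0 - ε) ^ (1 / α)) :
    ((1 - ε * Real.sqrt ((n : ℝ) / (1 - p0))) / 2) * ((n : ℝ) / 2) *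
        |c p0 ^ (1 / α) - c (p0 - ε) ^ (1 / α)| / D
      ≤ max
          (max (expDev θ1 π n 0 ((n : ℝ) * c p0 ^ (1 / α) / D))
               (expDev θ1 π n 1 ((n : ℝ) * c (p0 - ε) ^ (1 / α) / D)))
          (max (expDev θ2 π n 0 ((n : ℝ) * c (p0 - ε) ^ (1 / α) / D))
               (expDev θ2 π n 1 ((n : ℝ) * c p0 ^ (1 / α) / D))) :=
  tracking_lower_bound_general n p0 ε hp0' hε hε' c hc α π θ1 θ2 hθ1 hθ2 D hD
end

section
/- Let f : [0,∞) → ℝ be bounded on compact subsets of [0,∞), with f(1) = 0, and suppose f is real analytic on (0,2) with Taylor expansion f(x) = Σ_{m≥0} a_m (x − 1)^m valid for x ∈ (0,2), where a_m = f^{(m)}(1)/m! and sup_{m≥1} |a_m| ≤ C_1 < ∞. Fix an integer r ≥ 1 and p ∈ (0,1). Let p̂ be the empirical mean of T ≥ 1 i.i.d. Bernoulli(p) random variables, and define the Taylor remainder R_{r+1} = p·f(p̂/p) − Σ_{m=0}^r a_m (p̂ − p)^m / p^{m−1}. Then there exists a finite constant C, depending only on f, r, and p, such that E[ R_{r+1}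 ] ≤ C · T^{−(r+1)/2}; in particular the bound can be taken of the form C = C_{f,r+1}·p^{−(r+1)/2} so that E[R_{r+1}] ≤ C_{f,r+1} (pT)^{−(r+1)/2}. -/
/-!
Where `|p̂ - p| ≤ p / 2`, the remainder is `p` times the tail of the Taylor series of `f` at `1`
evaluated at `p̂ / p - 1`; as the coefficients are bounded by `C₁`, it is at most
`2 C₁ |p̂ - p| ^ (r + 1) / p ^ r`. Elsewhere the remainder is merely bounded (`f` is bounded on
`[0, 1 / p]`), but `(2 |p̂ - p| / p) ^ (r + 1) ≥ 1` there. Hence `|R| ≤ K |p̂ - p| ^ (r + 1)` on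
`[0, 1]`, and it remains to bound `E |p̂ - p| ^ (r + 1)`. By Hoeffding's lemma `T (p̂ - p)` is
sub-Gaussian with parameter `T / 4`, and `|y| ^ n ≤ n! (e ^ y + e ^ (-y))` turns the bound on its
moment generating function at `t = 1 / √T` into `E |p̂ - p| ^ n ≤ 2 n! e ^ (1 / 8) T ^ (-n / 2)`.
-/

open MeasureTheory Finset ProbabilityTheory
open scoped Nat NNReal

/-- `R_{r+1}` as a function of `p̂ = x`. -/
noncomputable def taylorRemainder (f : ℝ → ℝ) (a : ℕ → ℝ) (r : ℕ) (p x : ℝ) : ℝ :=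
  p * f (x / p) - ∑ m ∈ range (r + 1), a m * (x - p) ^ m / p ^ ((m : ℤ) - 1)

theorem abs_sub_sum_range_le_of_hasSum {a : ℕ → ℝ} {C y s : ℝ} {n : ℕ}
    (hs : HasSum (fun m ↦ a m * y ^ m) s) (hy : |y| ≤ 1 / 2) (hC : ∀ m, n ≤ m → |a m| ≤ C) :
    |s - ∑ m ∈ range n, a m * y ^ m| ≤ 2 * C * |y| ^ n := by
  have htail : HasSum (fun k ↦ a (k + n) * y ^ (k + n)) (s - ∑ m ∈ range n, a m * y ^ m) :=
    (hasSum_nat_add_iff' n).mpr hs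
  have hgeom : HasSum (fun k : ℕ ↦ C * |y| ^ n * (1 / 2) ^ k) (2 * C * |y| ^ n) := by
    rw [show 2 * C * |y| ^ n = C * |y| ^ n * 2 by ring]
    exact hasSum_geometric_two.mul_left _
  refine htail.norm_le_of_bounded hgeom fun k ↦ ?_
  rw [Real.norm_eq_abs, abs_mul, abs_pow, pow_add, mul_comm (|y| ^ k), ← mul_assoc]
  have hC0 : 0 ≤ C := (abs_nonneg _).trans (hC n le_rfl)
  gcongr
  exact hC _ (Nat.le_add_left n k)

section Remainder

variable {f : ℝ → ℝ} {a : ℕ → ℝ} {C₁ p : ℝ} {r : ℕ}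

theorem abs_taylorRemainder_le_of_abs_sub_le
    (hTaylor : ∀ x ∈ Set.Ioo (0 : ℝ) 2, HasSum (fun m ↦ a m * (x - 1) ^ m) (f x))
    (hC₁ : ∀ m, 1 ≤ m → |a m| ≤ C₁) (hp : 0 < p) {x : ℝ} (hx : |x - p| ≤ p / 2) :
    |taylorRemainder f a r p x| ≤ 2 * C₁ / p ^ r * |x - p| ^ (r + 1) := by
  set y := x / p - 1 with hy_def
  have hy : |y| = |x - p| / p := by
    rw [hy_def, ← abs_of_pos hp, ← abs_div, abs_of_pos hp, sub_div, div_self hp.ne']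
  have hy2 : |y| ≤ 1 / 2 := by
    rw [hy, div_le_iff₀ hp]; linarith
  have hxp : x / p ∈ Set.Ioo (0 : ℝ) 2 := by
    have := abs_le.mp hy2
    constructor <;> linarith [hy_def]
  have hR : taylorRemainder f a r p x = p * (f (x / p) - ∑ m ∈ range (r + 1), a m * y ^ m) := by
    rw [taylorRemainder, mul_sub, mul_sum]
    congr 1
    refine sum_congr rfl fun m _ ↦ ?_
    rw [hy_def, zpow_sub₀ hp.ne', zpow_natCast, zpow_one, div_sub_one hp.ne', div_pow]
    field_simp
  have htail := abs_sub_sum_range_le_of_hasSum (C := C₁) (n := r + 1) (hTaylor _ hxp) hy2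
    fun m hm ↦ hC₁ m (by omega)
  rw [hR, abs_mul, abs_of_pos hp]
  calc p * |f (x / p) - ∑ m ∈ range (r + 1), a m * y ^ m|
      ≤ p * (2 * C₁ * |y| ^ (r + 1)) := by gcongr
    _ = 2 * C₁ / p ^ r * |x - p| ^ (r + 1) := by
      rw [hy, div_pow, pow_succ]
      field_simp
      ring

theorem exists_abs_taylorRemainder_le
    (hbound : ∀ s : Set ℝ, s ⊆ Set.Ici (0 : ℝ) → IsCompact s → ∃ M, ∀ x ∈ s, |f x| ≤ M)
    (hp : 0 < p) : ∃ B, ∀ x ∈ Set.Icc (0 : ℝ) 1, |taylorRemainder f a r p x| ≤ B := by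
  obtain ⟨M, hM⟩ := hbound (Set.Icc 0 p⁻¹) (fun x hx ↦ hx.1) isCompact_Icc
  obtain ⟨P, hP⟩ := (isCompact_Icc : IsCompact (Set.Icc (0 : ℝ) 1)).exists_bound_of_continuousOn
    (f := fun x ↦ ∑ m ∈ range (r + 1), a m * (x - p) ^ m / p ^ ((m : ℤ) - 1)) (by fun_prop)
  refine ⟨p * M + P, fun x hx ↦ (abs_sub _ _).trans (add_le_add ?_ (hP x hx))⟩
  have hxp : x / p ∈ Set.Icc 0 p⁻¹ :=
    ⟨div_nonneg hx.1 hp.le,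
      by rw [div_eq_mul_inv]; exact mul_le_of_le_one_left (inv_nonneg.mpr hp.le) hx.2⟩
  rw [abs_mul, abs_of_pos hp]
  exact mul_le_mul_of_nonneg_left (hM _ hxp) hp.le

theorem exists_abs_taylorRemainder_le_mul_pow
    (hbound : ∀ s : Set ℝ, s ⊆ Set.Ici (0 : ℝ) → IsCompact s → ∃ M, ∀ x ∈ s, |f x| ≤ M)
    (hTaylor : ∀ x ∈ Set.Ioo (0 : ℝ) 2, HasSum (fun m ↦ a m * (x - 1) ^ m) (f x))
    (hC₁ : ∀ m, 1 ≤ m → |a m| ≤ C₁) (hp : 0 < p) :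
    ∃ K, 0 ≤ K ∧ ∀ x ∈ Set.Icc (0 : ℝ) 1,
      |taylorRemainder f a r p x| ≤ K * |x - p| ^ (r + 1) := by
  obtain ⟨B, hB⟩ := exists_abs_taylorRemainder_le (a := a) (r := r) hbound hp
  have hB0 : 0 ≤ B := (abs_nonneg _).trans (hB 0 ⟨le_rfl, zero_le_one⟩)
  refine ⟨max (2 * C₁ / p ^ r) (B * (2 / p) ^ (r + 1)), by positivity, fun x hx ↦ ?_⟩
  by_cases hnear : |x - p| ≤ p / 2
  · refine (abs_taylorRemainder_le_of_abs_sub_le hTaylor hC₁ hp hnear).trans ?_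
    gcongr
    exact le_max_left _ _
  · have hfar : 1 ≤ (2 / p) ^ (r + 1) * |x - p| ^ (r + 1) := by
      rw [← mul_pow]
      refine one_le_pow₀ ?_
      rw [div_mul_eq_mul_div, le_div_iff₀ hp]
      linarith
    calc |taylorRemainder f a r p x| ≤ B * 1 := by rw [mul_one]; exact hB x hx
      _ ≤ B * ((2 / p) ^ (r + 1) * |x - p| ^ (r + 1)) := by gcongr
      _ ≤ max (2 * C₁ / p ^ r) (B * (2 / p) ^ (r + 1)) * |x - p| ^ (r + 1) := by
        rw [← mul_assoc]; gcongr; exact le_max_right _ _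

end Remainder

theorem pow_abs_le_factorial_mul_exp_add_exp (y : ℝ) (n : ℕ) :
    |y| ^ n ≤ n ! * (Real.exp y + Real.exp (-y)) := by
  have h := Real.pow_div_factorial_le_exp _ (abs_nonneg y) n
  rw [div_le_iff₀ (by positivity), mul_comm] at h
  refine h.trans (mul_le_mul_of_nonneg_left ?_ (by positivity))
  rcases abs_cases y with ⟨hy, -⟩ | ⟨hy, -⟩ <;> rw [hy] <;>
    linarith [Real.exp_pos y, Real.exp_pos (-y)]

theorem ProbabilityTheory.HasSubgaussianMGF.integral_pow_abs_mul_le {Ω : Type*}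
    [MeasurableSpace Ω] {μ : Measure Ω} {X : Ω → ℝ} {c : ℝ≥0}
    (h : HasSubgaussianMGF X c μ) (n : ℕ) (t : ℝ) :
    ∫ ω, |t * X ω| ^ n ∂μ ≤ 2 * n ! * Real.exp (c * t ^ 2 / 2) := by
  have hint : Integrable (fun ω ↦ Real.exp (t * X ω) + Real.exp ((-t) * X ω)) μ :=
    (h.integrable_exp_mul t).add (h.integrable_exp_mul (-t))
  calc ∫ ω, |t * X ω| ^ n ∂μ
      ≤ ∫ ω, n ! * (Real.exp (t * X ω) + Real.exp ((-t) * X ω)) ∂μ := by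
        refine integral_mono_of_nonneg (ae_of_all _ fun ω ↦ by positivity) (hint.const_mul _)
          (ae_of_all _ fun ω ↦ ?_)
        simpa [neg_mul] using pow_abs_le_factorial_mul_exp_add_exp (t * X ω) n
    _ = n ! * (mgf X μ t + mgf X μ (-t)) := by
        rw [integral_const_mul, integral_add (h.integrable_exp_mul t) (h.integrable_exp_mul (-t))]
        rfl
    _ ≤ n ! * (Real.exp (c * t ^ 2 / 2) + Real.exp (c * (-t) ^ 2 / 2)) := by
        gcongr
        · exact h.mgf_le t
        · exact h.mgf_le (-t)
    _ = 2 * n ! * Real.exp (c * t ^ 2 / 2) := by rw [neg_sq]; ring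

theorem Measurable.comp_of_countable_range {α β γ : Type*} [MeasurableSpace α]
    [MeasurableSpace β] [MeasurableSingletonClass β] [MeasurableSpace γ] {g : α → β}
    (hg : Measurable g) (hc : (Set.range g).Countable) (h : β → γ) : Measurable (h ∘ g) := by
  have := hc.to_subtype
  exact (measurable_of_countable fun y : Set.range g ↦ h y).comp
    (hg.subtype_mk (h := Set.mem_range_self))

theorem integral_eq_measureReal_of_forall_eq_zero_or_eq_one {Ω : Type*} [MeasurableSpace Ω]
    {μ : Measure Ω} {Z : Ω → ℝ} (hm : Measurable Z) (hZ : ∀ ω, Z ω = 0 ∨ Z ω = 1) :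
    ∫ ω, Z ω ∂μ = μ.real {ω | Z ω = 1} := by
  have hind : Z = {ω | Z ω = 1}.indicator 1 :=
    funext fun ω ↦ by rcases hZ ω with h | h <;> simp [h]
  calc ∫ ω, Z ω ∂μ = ∫ ω, {ω | Z ω = 1}.indicator 1 ω ∂μ := by conv_lhs => rw [hind]
    _ = μ.real {ω | Z ω = 1} := integral_indicator_one (hm (measurableSet_singleton 1))

noncomputable def empiricalMean {ι Ω : Type*} (Z : ι → Ω → ℝ) (s : Finset ι) (ω : Ω) : ℝ :=
  (∑ i ∈ s, Z i ω) / (s.card : ℝ)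

section EmpiricalMean

variable {ι Ω : Type*} {Z : ι → Ω → ℝ} {s : Finset ι}

theorem empiricalMean_mem_Icc (hZ : ∀ i ω, Z i ω ∈ Set.Icc 0 1) (hs : s.Nonempty) (ω : Ω) : empiricalMean Z s ω ∈ Set.Icc 0 1 := by
  have hN : (0 : ℝ) < s.card := by exact_mod_cast hs.card_pos
  refine ⟨div_nonneg (sum_nonneg fun i _ ↦ (hZ i ω).1) hN.le, (div_le_one hN).mpr ?_⟩
  calc ∑ i ∈ s, Z i ω ≤ ∑ i ∈ s, (1 : ℝ) := sum_le_sum fun i _ ↦ (hZ i ω).2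
    _ = s.card := by simp

theorem countable_range_empiricalMean (hZ : ∀ i ω, Z i ω = 0 ∨ Z i ω = 1) :
    (Set.range (empiricalMean Z s)).Countable := by
  refine (Set.countable_range fun k : ℕ ↦ (k : ℝ) / s.card).mono ?_
  rintro _ ⟨ω, rfl⟩
  obtain ⟨k, hk⟩ : ∑ i ∈ s, Z i ω ∈ Set.range ((↑) : ℕ → ℝ) := by
    refine sum_induction _ (· ∈ Set.range ((↑) : ℕ → ℝ)) ?_ ⟨0, Nat.cast_zero⟩ fun i _ ↦ ?_
    · rintro _ _ ⟨m, rfl⟩ ⟨n, rfl⟩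
      exact ⟨m + n, Nat.cast_add m n⟩
    · rcases hZ i ω with h | h
      · exact ⟨0, by rw [h, Nat.cast_zero]⟩
      · exact ⟨1, by rw [h, Nat.cast_one]⟩
  exact ⟨k, by simp only [empiricalMean, hk]⟩

variable [MeasurableSpace Ω] {μ : Measure Ω} [IsProbabilityMeasure μ] {p : ℝ}

theorem integral_pow_abs_empiricalMean_sub_le (hmeas : ∀ i, Measurable (Z i))
    (hind : iIndepFun Z μ) (hZ : ∀ i ω, Z i ω ∈ Set.Icc 0 1) (hmean : ∀ i, μ[Z i] = p)
    (hs : s.Nonempty) (n : ℕ) :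
    ∫ ω, |empiricalMean Z s ω - p| ^ n ∂μ
      ≤ 2 * n ! * Real.exp (1 / 8) * (s.card : ℝ) ^ (-(n / 2 : ℝ)) := by
  set N : ℝ := (s.card : ℝ) with hN_def
  have hN : 0 < N := by simpa [N] using hs.card_pos
  have hsub : ∀ i ∈ s, HasSubgaussianMGF (fun ω ↦ Z i ω - p) (1 / 4) μ := by
    intro i _
    have h := hasSubgaussianMGF_of_mem_Icc (hmeas i).aemeasurable (ae_of_all μ (hZ i))
    rw [hmean i] at h
    convert h using 1
    norm_num
  have hS := HasSubgaussianMGF.sum_of_iIndepFun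
    (hind.comp (fun _ x ↦ x - p) fun _ ↦ measurable_id.sub_const p) hsub
  have hscale : ∀ ω, |empiricalMean Z s ω - p| ^ n
      = |(√N)⁻¹ * ∑ i ∈ s, (Z i ω - p)| ^ n * ((√N)⁻¹) ^ n := by
    intro ω
    rw [← mul_pow, ← abs_of_pos (inv_pos.mpr (Real.sqrt_pos.mpr hN)), ← abs_mul,
      abs_of_pos (inv_pos.mpr (Real.sqrt_pos.mpr hN)), empiricalMean, sum_sub_distrib, sum_const,
      nsmul_eq_mul]
    congr 1
    field_simp
    rw [Real.sq_sqrt hN.le]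
  have hexp : ((∑ i ∈ s, (1 / 4 : ℝ≥0) : ℝ≥0) : ℝ) * ((√N)⁻¹) ^ 2 / 2 = 1 / 8 := by
    push_cast
    rw [sum_const, nsmul_eq_mul, ← hN_def, inv_pow, Real.sq_sqrt hN.le]
    field_simp
    norm_num
  have hpow : ((√N)⁻¹) ^ n = N ^ (-(n / 2 : ℝ)) := by
    rw [Real.sqrt_eq_rpow, ← Real.rpow_neg hN.le, ← Real.rpow_natCast, ← Real.rpow_mul hN.le]
    ring_nf
  simp_rw [hscale]
  rw [integral_mul_const, ← hpow, ← hexp]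
  gcongr
  exact hS.integral_pow_abs_mul_le n _

theorem integral_comp_empiricalMean_le {g : ℝ → ℝ} {K : ℝ} {n : ℕ} (hK0 : 0 ≤ K)
    (hg : ∀ x ∈ Set.Icc (0 : ℝ) 1, |g x| ≤ K * |x - p| ^ n) (hmeas : ∀ i, Measurable (Z i))
    (hind : iIndepFun Z μ) (hZ : ∀ i ω, Z i ω = 0 ∨ Z i ω = 1) (hmean : ∀ i, μ[Z i] = p)
    (hs : s.Nonempty) :
    ∫ ω, g (empiricalMean Z s ω) ∂μ
      ≤ K * (2 * n ! * Real.exp (1 / 8) * (s.card : ℝ) ^ (-(n / 2 : ℝ))) := by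
  have hZ' : ∀ i ω, Z i ω ∈ Set.Icc (0 : ℝ) 1 := fun i ω ↦ by
    rcases hZ i ω with h | h <;> simp [h]
  have hmeas_mean : Measurable (empiricalMean Z s) :=
    (Finset.measurable_sum _ fun i _ ↦ hmeas i).div_const _
  have hdev : Integrable (fun ω ↦ |empiricalMean Z s ω - p| ^ n) μ := by
    refine .of_bound (by fun_prop) ((1 + |p|) ^ n) (ae_of_all _ fun ω ↦ ?_)
    have h := empiricalMean_mem_Icc hZ' hs ω
    rw [Real.norm_eq_abs, abs_pow, abs_abs]
    gcongr
    exact (abs_sub _ _).trans (by rw [abs_of_nonneg h.1]; linarith [h.2])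
  -- `g` need not be measurable, but the empirical mean takes only countably many values.
  have hint : Integrable (fun ω ↦ g (empiricalMean Z s ω)) μ :=
    (hdev.const_mul K).mono' ((hmeas_mean.comp_of_countable_range
      (countable_range_empiricalMean hZ) g).aestronglyMeasurable)
      (ae_of_all _ fun ω ↦ hg _ (empiricalMean_mem_Icc hZ' hs ω))
  calc ∫ ω, g (empiricalMean Z s ω) ∂μ
      ≤ ∫ ω, K * |empiricalMean Z s ω - p| ^ n ∂μ :=
        integral_mono hint (hdev.const_mul K)
          fun ω ↦ (le_abs_self _).trans (hg _ (empiricalMean_mem_Icc hZ' hs ω))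
    _ = K * ∫ ω, |empiricalMean Z s ω - p| ^ n ∂μ := integral_const_mul _ _
    _ ≤ K * (2 * n ! * Real.exp (1 / 8) * (s.card : ℝ) ^ (-(n / 2 : ℝ))) := by
        gcongr
        exact integral_pow_abs_empiricalMean_sub_le hmeas hind hZ' hmean hs n

end EmpiricalMean

theorem f_divergence_remainder_bound_general
    (f : ℝ → ℝ)
    (hbound : ∀ s : Set ℝ, s ⊆ Set.Ici (0 : ℝ) → IsCompact s → ∃ M, ∀ x ∈ s, |f x| ≤ M)
    (a : ℕ → ℝ)
    (hTaylor : ∀ x ∈ Set.Ioo (0 : ℝ) 2, HasSum (fun m => a m * (x - 1) ^ m) (f x))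
    (C1 : ℝ) (hC1 : ∀ m : ℕ, 1 ≤ m → |a m| ≤ C1)
    (r : ℕ) (p : ℝ) (hp : p ∈ Set.Ioo (0 : ℝ) 1) :
    ∃ C : ℝ, ∀ T : ℕ, 1 ≤ T →
      ∀ (Ω : Type) [MeasurableSpace Ω] (μ : Measure Ω), IsProbabilityMeasure μ →
      ∀ Z : ℕ → Ω → ℝ, (∀ s, Measurable (Z s)) →
        ProbabilityTheory.iIndepFun Z μ →
        (∀ s, μ {ω | Z s ω = 1} = ENNReal.ofReal p) →
        (∀ s ω, Z s ω = 0 ∨ Z s ω = 1) →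
        ∫ ω, (p * f (((∑ s ∈ Finset.Icc 1 T, Z s ω) / T) / p)
              - ∑ m ∈ Finset.range (r + 1),
                  a m * ((∑ s ∈ Finset.Icc 1 T, Z s ω) / T - p) ^ m / p ^ ((m : ℤ) - 1)) ∂μ
          ≤ C * (p * T) ^ (-(((r : ℝ) + 1) / 2)) := by
  obtain ⟨K, hK0, hK⟩ := exists_abs_taylorRemainder_le_mul_pow (r := r) hbound hTaylor hC1 hp.1
  refine ⟨K * (2 * (r + 1)! * Real.exp (1 / 8)) * p ^ (((r : ℝ) + 1) / 2), ?_⟩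
  intro T hT Ω _ μ _ Z hZm hind hZp hZ01
  have hcard : ((Icc 1 T).card : ℝ) = T := by simp
  have hmean : ∀ s, μ[Z s] = p := fun s ↦ by
    rw [integral_eq_measureReal_of_forall_eq_zero_or_eq_one (hZm s) (hZ01 s), measureReal_def,
      hZp s, ENNReal.toReal_ofReal hp.1.le]
  have hphat : ∀ ω, (∑ s ∈ Icc 1 T, Z s ω) / (T : ℝ) = empiricalMean Z (Icc 1 T) ω :=
    fun ω ↦ by rw [← hcard]; rfl
  show ∫ ω, taylorRemainder f a r p ((∑ s ∈ Icc 1 T, Z s ω) / T) ∂μ ≤ _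
  simp_rw [hphat]
  refine (integral_comp_empiricalMean_le hK0 hK hZm hind hZ01 hmean
    (nonempty_Icc.mpr hT)).trans_eq ?_
  have : 0 < p ^ (((r : ℝ) + 1) / 2) := Real.rpow_pos_of_pos hp.1 _
  rw [hcard, Real.mul_rpow hp.1.le (Nat.cast_nonneg T), Real.rpow_neg hp.1.le]
  push_cast
  field_simp

/-- Expected Taylor remainder bound for `f`-divergences.  If `f`
is bounded on compacts of `[0,∞)`, vanishes at `1`, and is real analytic on
`(0,2)` with Taylor coefficients `a_m = f^{(m)}(1)/m!` satisfying
`sup_{m≥1} |a_m| ≤ C₁`, then for fixed `r ≥ 1` and `p ∈ (0,1)` there is a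
constant `C_{f,r+1}` (independent of `T`) such that, with `p̂` the empirical
mean of `T` i.i.d. Bernoulli(`p`) variables and
`R_{r+1} = p f(p̂/p) − Σ_{m=0}^r a_m (p̂−p)^m / p^{m−1}`, one has
`E[R_{r+1}] ≤ C_{f,r+1} (pT)^{−(r+1)/2}`. -/
theorem f_divergence_remainder_bound
    (f : ℝ → ℝ)
    (hbound : ∀ s : Set ℝ, s ⊆ Set.Ici (0 : ℝ) → IsCompact s → ∃ M, ∀ x ∈ s, |f x| ≤ M)
    (hf1 : f 1 = 0)
    (hanalytic : AnalyticOnNhd ℝ f (Set.Ioo (0 : ℝ) 2))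
    (a : ℕ → ℝ) (ha : ∀ m, a m = iteratedDeriv m f 1 / m.factorial)
    (hTaylor : ∀ x ∈ Set.Ioo (0 : ℝ) 2, HasSum (fun m => a m * (x - 1) ^ m) (f x))
    (C1 : ℝ) (hC1 : ∀ m : ℕ, 1 ≤ m → |a m| ≤ C1)
    (r : ℕ) (hr : 1 ≤ r) (p : ℝ) (hp : p ∈ Set.Ioo (0 : ℝ) 1) :
    ∃ C : ℝ, ∀ T : ℕ, 1 ≤ T →
      ∀ (Ω : Type) [MeasurableSpace Ω] (μ : Measure Ω), IsProbabilityMeasure μ →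
      ∀ Z : ℕ → Ω → ℝ, (∀ s, Measurable (Z s)) →
        ProbabilityTheory.iIndepFun Z μ →
        (∀ s, μ {ω | Z s ω = 1} = ENNReal.ofReal p) →
        (∀ s ω, Z s ω = 0 ∨ Z s ω = 1) →
        ∫ ω, (p * f (((∑ s ∈ Finset.Icc 1 T, Z s ω) / T) / p)
              - ∑ m ∈ Finset.range (r + 1),
                  a m * ((∑ s ∈ Finset.Icc 1 T, Z s ω) / T - p) ^ m / p ^ ((m : ℤ) - 1)) ∂μ
          ≤ C * (p * T) ^ (-(((r : ℝ) + 1) / 2)) :=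
  f_divergence_remainder_bound_general f hbound a hTaylor C1 hC1 r p hp
end
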